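/- arXiv:2604.17302 — 4 statements merged into one kernel-verified Lean document; each statement's English description precedes it below -/
import Mathlib

section
/- Let $g : \mathcal{S} \to [0,1]$ be Hölder continuous with constant $L$ and exponent $\alpha \in (0,1]$, where $\mathcal{S} = \{(x,y)\in[0,1]^2 : x+y\le 1\}$. Fix $(x,y) \in \mathcal{S}$ and $k \in \mathbb{N}$, and let $(V_1, V_2)$ be multinomially distributed with $k$ trials and cell probabilities $(x, y, 1-x-y)$. Then $\left| \mathbb{E}\!\left[ g\!\left(\tfrac{V_1}{k}, \tfrac{V_2}{k}\right) \right] - g(x,y) \right| \le 2^{-\alpha/2} L\, k^{-\alpha/2}$. -/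
open Finset Real

lemma choose_sym' (k i j : ℕ) (h : i + j ≤ k) :
    k.choose i * (k - i).choose j = k.choose j * (k - j).choose i := by
  have key : ∀ a b : ℕ, a + b ≤ k →
      k.choose a * (k - a).choose b * (a.factorial * b.factorial * (k - a - b).factorial)
        = k.factorial := by
    intro a b hab
    have h1 : b ≤ k - a := by omega
    have h2 : a ≤ k := by omega
    have e1 : (k - a).choose b * b.factorial * (k - a - b).factorial = (k - a).factorial :=
      Nat.choose_mul_factorial_mul_factorial h1
    have e2 : k.choose a * a.factorial * (k - a).factorial = k.factorial :=
      Nat.choose_mul_factorial_mul_factorial h2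
    calc k.choose a * (k - a).choose b * (a.factorial * b.factorial * (k - a - b).factorial)
        = k.choose a * a.factorial * ((k - a).choose b * b.factorial * (k - a - b).factorial) := by
          ring
      _ = k.choose a * a.factorial * (k - a).factorial := by rw [e1]
      _ = k.factorial := e2
  have hji : j + i ≤ k := by omega
  have hpos : 0 < i.factorial * j.factorial * (k - i - j).factorial := by positivity
  have hk1 := key i j h
  have hk2 := key j i hji
  have hij : k - j - i = k - i - j := by omega
  rw [hij] at hk2
  have heq : k.choose i * (k - i).choose j * (i.factorial * j.factorial * (k - i - j).factorial)
      = k.choose j * (k - j).choose i * (i.factorial * j.factorial * (k - i - j).factorial) := by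
    rw [hk1, ← hk2]; ring
  exact Nat.eq_of_mul_eq_mul_right hpos heq

lemma bern_var' {n : ℕ} (hn : 1 ≤ n) {x : ℝ} (hx0 : 0 ≤ x) (hx1 : x ≤ 1) :
    ∑ i ∈ range (n+1), ((i:ℝ)/n - x)^2 * ((n.choose i : ℝ) * x^i * (1-x)^(n-i))
      = x * (1-x) / n := by
  have hpos : 0 < (n : ℝ) := by exact_mod_cast hn
  have h := bernstein.variance (by omega : n ≠ 0) (⟨x, hx0, hx1⟩ : unitInterval)
  simp only [bernstein_apply, bernstein.z] at h
  rw [Fin.sum_univ_eq_sum_range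
    (fun i => ((x:ℝ) - (i:ℝ)/n)^2 * ((n.choose i : ℝ) * x^i * (1-x)^(n-i)))] at h
  rw [← h]
  exact Finset.sum_congr rfl (fun i _ => by ring)

def triSet (k : ℕ) : Finset (ℕ × ℕ) :=
  ((range (k+1)) ×ˢ (range (k+1))).filter (fun p => p.1 + p.2 ≤ k)

lemma tri_eq (k : ℕ) (f : ℕ → ℕ → ℝ) :
    ∑ i ∈ range (k+1), ∑ j ∈ range (k+1-i), f i j = ∑ p ∈ triSet k, f p.1 p.2 := by
  rw [triSet, Finset.sum_filter, Finset.sum_product]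
  apply Finset.sum_congr rfl
  intro i hi
  rw [Finset.mem_range] at hi
  rw [← Finset.sum_filter]
  apply Finset.sum_congr _ (fun _ _ => rfl)
  ext j
  simp only [Finset.mem_filter, Finset.mem_range]
  omega

lemma tri_swap (k : ℕ) (f : ℕ → ℕ → ℝ) :
    ∑ p ∈ triSet k, f p.1 p.2 = ∑ p ∈ triSet k, f p.2 p.1 := by
  apply Finset.sum_nbij' (fun p => Prod.swap p) (fun p => Prod.swap p) <;>
    simp [triSet, Finset.mem_filter] <;> omega

lemma inner_binom (n : ℕ) (b c : ℝ) :
    ∑ j ∈ range (n+1), ((n.choose j : ℝ)) * b^j * c^(n-j) = (b+c)^n := by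
  rw [add_pow]
  exact Finset.sum_congr rfl (fun j _ => by ring)

lemma marg (k : ℕ) (a b : ℝ) (f : ℕ → ℝ) :
    ∑ p ∈ triSet k, ((k.choose p.1 : ℝ) * ((k-p.1).choose p.2) * a^p.1 * b^p.2
        * (1-a-b)^(k-p.1-p.2)) * f p.1
      = ∑ i ∈ range (k+1), ((k.choose i : ℝ) * a^i * (1-a)^(k-i)) * f i := by
  rw [← tri_eq k (fun i j => ((k.choose i : ℝ) * ((k-i).choose j) * a^i * b^j
        * (1-a-b)^(k-i-j)) * f i)]
  apply Finset.sum_congr rfl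
  intro i hi
  rw [Finset.mem_range] at hi
  have hn : k + 1 - i = (k - i) + 1 := by omega
  have step : ∑ j ∈ range (k+1-i), ((k.choose i : ℝ) * ((k-i).choose j) * a^i * b^j
      * (1-a-b)^(k-i-j)) * f i
      = ((k.choose i : ℝ) * a^i * f i)
          * ∑ j ∈ range ((k-i)+1), (((k-i).choose j : ℝ)) * b^j * (1-a-b)^((k-i)-j) := by
    rw [Finset.mul_sum, hn]
    exact Finset.sum_congr rfl (fun j _ => by ring)
  rw [step, inner_binom]
  have hba : b + (1-a-b) = 1 - a := by ring
  rw [hba]; ring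

open Finset Real in
theorem multinomial_holder_bound
    (S : Set (ℝ × ℝ)) (hS : S = {p : ℝ × ℝ | 0 ≤ p.1 ∧ p.1 ≤ 1 ∧ 0 ≤ p.2 ∧ p.2 ≤ 1 ∧ p.1 + p.2 ≤ 1})
    (g : ℝ × ℝ → ℝ) (hgrange : ∀ p ∈ S, g p ∈ Set.Icc (0:ℝ) 1)
    (L α : ℝ) (hα : α ∈ Set.Ioc (0:ℝ) 1)
    (hHolder : ∀ p ∈ S, ∀ q ∈ S,
      |g p - g q| ≤ L * (Real.sqrt ((p.1 - q.1)^2 + (p.2 - q.2)^2)) ^ α)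
    (x y : ℝ) (hxy : (x, y) ∈ S) (k : ℕ) (hk : 1 ≤ k) :
    |(∑ i ∈ range (k+1), ∑ j ∈ range (k+1-i),
        g ((i : ℝ)/k, (j : ℝ)/k) * (k.choose i) * ((k-i).choose j) *
          x ^ i * y ^ j * (1 - x - y) ^ (k - i - j)) - g (x, y)|
      ≤ (2:ℝ) ^ (-(α/2)) * L * (k:ℝ) ^ (-(α/2)) := by
  rw [hS] at hxy
  obtain ⟨hx0, hx1, hy0, hy1, hxy1⟩ := hxy
  have hk0 : (0:ℝ) < k := by exact_mod_cast hk
  have hα0 : 0 < α := hα.1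
  have hα1 : α ≤ 1 := hα.2
  have hz0 : (0:ℝ) ≤ 1 - x - y := by dsimp at hxy1; linarith
  set W : ℕ × ℕ → ℝ := fun p =>
    (k.choose p.1 : ℝ) * ((k-p.1).choose p.2) * x^p.1 * y^p.2 * (1-x-y)^(k-p.1-p.2) with hW
  set t : ℕ × ℕ → ℝ := fun p => ((p.1:ℝ)/k - x)^2 + ((p.2:ℝ)/k - y)^2 with ht
  have hW0 : ∀ p ∈ triSet k, 0 ≤ W p := by
    intro p _
    simp only [hW]
    have h1 := pow_nonneg hx0 p.1
    have h2 := pow_nonneg hy0 p.2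
    have h3 := pow_nonneg hz0 (k - p.1 - p.2)
    positivity
  have ht0 : ∀ p : ℕ × ℕ, 0 ≤ t p := by intro p; simp only [ht]; positivity
  -- total mass
  have hmass : ∑ p ∈ triSet k, W p = 1 := by
    have h := marg k x y (fun _ => (1:ℝ))
    simp only [mul_one] at h
    simp only [hW]
    rw [h, inner_binom k x (1-x)]
    norm_num
  -- first marginal variance
  have hvar1 : ∑ p ∈ triSet k, W p * (((p.1:ℝ))/k - x)^2 = x*(1-x)/k := by
    simp only [hW]
    rw [marg k x y (fun i => ((i:ℝ)/k - x)^2), ← bern_var' hk hx0 hx1]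
    exact Finset.sum_congr rfl (fun i _ => by ring)
  -- second marginal variance
  have hvar2 : ∑ p ∈ triSet k, W p * (((p.2:ℝ))/k - y)^2 = y*(1-y)/k := by
    have e1 : ∑ p ∈ triSet k, W p * (((p.2:ℝ))/k - y)^2
        = ∑ p ∈ triSet k, ((k.choose p.2 : ℝ) * ((k-p.2).choose p.1) * y^p.2 * x^p.1
            * (1-y-x)^(k-p.2-p.1)) * (((p.2:ℝ))/k - y)^2 := by
      apply Finset.sum_congr rfl
      intro p hp
      simp only [triSet, Finset.mem_filter, Finset.mem_range] at hp
      have hc : (k.choose p.1 : ℝ) * ((k-p.1).choose p.2 : ℝ)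
          = (k.choose p.2 : ℝ) * ((k-p.2).choose p.1 : ℝ) := by
        exact_mod_cast congrArg (Nat.cast (R := ℝ)) (choose_sym' k p.1 p.2 hp.2)
      have hsub : k - p.1 - p.2 = k - p.2 - p.1 := by omega
      simp only [hW]
      rw [hsub, show (1:ℝ)-x-y = 1-y-x by ring]
      linear_combination (x ^ p.1 * y ^ p.2 * ((1:ℝ)-y-x) ^ (k - p.2 - p.1)
        * (((p.2:ℝ))/k - y)^2) * hc
    have e2 := tri_swap k (fun i j => ((k.choose j : ℝ) * ((k-j).choose i) * y^j * x^i
        * (1-y-x)^(k-j-i)) * (((j:ℝ))/k - y)^2)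
    rw [e1, e2]
    have e3 : ∑ p ∈ triSet k, ((k.choose p.1 : ℝ) * ((k-p.1).choose p.2) * y^p.1 * x^p.2
        * (1-y-x)^(k-p.1-p.2)) * (((p.1:ℝ))/k - y)^2
        = ∑ i ∈ range (k+1), ((k.choose i : ℝ) * y^i * (1-y)^(k-i)) * (((i:ℝ))/k - y)^2 :=
      marg k y x (fun i => ((i:ℝ)/k - y)^2)
    rw [e3, ← bern_var' hk hy0 hy1]
    exact Finset.sum_congr rfl (fun i _ => by ring)
  have hvar : ∑ p ∈ triSet k, W p * t p = x*(1-x)/k + y*(1-y)/k := by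
    simp only [ht, mul_add, Finset.sum_add_distrib]
    rw [hvar1, hvar2]
  have hvle : ∑ p ∈ triSet k, W p * t p ≤ 1/(2*(k:ℝ)) := by
    rw [hvar]
    have hb : x*(1-x) + y*(1-y) ≤ 1/2 := by
      nlinarith [sq_nonneg (x - 1/2), sq_nonneg (y - 1/2)]
    calc x*(1-x)/k + y*(1-y)/k = (x*(1-x) + y*(1-y))/k := by ring
      _ ≤ (1/2)/k := by gcongr
      _ = 1/(2*(k:ℝ)) := by ring
  -- membership of grid points
  have hmem : ∀ p ∈ triSet k, (((p.1:ℝ))/k, ((p.2:ℝ))/k) ∈ S := by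
    intro p hp
    simp only [triSet, Finset.mem_filter, Finset.mem_range] at hp
    rw [hS]
    have h1 : (p.1 : ℝ) ≤ k := by exact_mod_cast by omega
    have h2 : (p.2 : ℝ) ≤ k := by exact_mod_cast by omega
    have h3 : (p.1 : ℝ) + (p.2 : ℝ) ≤ k := by exact_mod_cast hp.2
    refine ⟨by positivity, ?_, by positivity, ?_, ?_⟩
    · exact (div_le_one hk0).mpr h1
    · exact (div_le_one hk0).mpr h2
    · show (p.1:ℝ)/k + (p.2:ℝ)/k ≤ 1
      rw [← add_div, div_le_one hk0]
      exact h3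
  -- L nonneg
  have hL : 0 ≤ L := by
    have h1 : ((0:ℝ),(0:ℝ)) ∈ S := by rw [hS]; norm_num
    have h2 : ((1:ℝ),(0:ℝ)) ∈ S := by rw [hS]; norm_num
    have h3 := hHolder (0,0) h1 (1,0) h2
    norm_num [Real.sqrt_one, Real.one_rpow] at h3
    exact le_trans (abs_nonneg _) h3
  -- sqrt to rpow
  have hd : ∀ p : ℕ × ℕ,
      (Real.sqrt ((((p.1:ℝ))/k - x)^2 + (((p.2:ℝ))/k - y)^2)) ^ α = t p ^ (α/2) := by
    intro p
    have h0 := ht0 p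
    simp only [ht] at h0 ⊢
    rw [Real.sqrt_eq_rpow, ← Real.rpow_mul h0]
    congr 1
    ring
  -- Jensen
  have hj : ∑ p ∈ triSet k, W p * t p ^ (α/2) ≤ (∑ p ∈ triSet k, W p * t p) ^ (α/2) := by
    have h2α : (1:ℝ) ≤ 2/α := by
      rw [le_div_iff₀ hα0]; linarith
    have hmean := Real.arith_mean_le_rpow_mean (triSet k) W (fun p => t p ^ (α/2)) hW0 hmass
      (fun p _ => Real.rpow_nonneg (ht0 p) _) h2α
    have e : ∀ p : ℕ × ℕ, (t p ^ (α/2)) ^ (2/α) = t p := by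
      intro p
      rw [← Real.rpow_mul (ht0 p)]
      rw [show (α/2)*(2/α) = 1 by field_simp]
      exact Real.rpow_one _
    simp only [e] at hmean
    rwa [one_div_div] at hmean
  have hrw : (∑ i ∈ range (k+1), ∑ j ∈ range (k+1-i),
        g ((i : ℝ)/k, (j : ℝ)/k) * (k.choose i) * ((k-i).choose j) *
          x ^ i * y ^ j * (1 - x - y) ^ (k - i - j))
      = ∑ p ∈ triSet k, W p * g (((p.1:ℝ))/k, ((p.2:ℝ))/k) := by
    rw [tri_eq k (fun i j => g ((i : ℝ)/k, (j : ℝ)/k) * (k.choose i) * ((k-i).choose j) *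
          x ^ i * y ^ j * (1 - x - y) ^ (k - i - j))]
    exact Finset.sum_congr rfl (fun p _ => by simp only [hW]; ring)
  rw [hrw]
  have hsplit : ∑ p ∈ triSet k, W p * g (((p.1:ℝ))/k, ((p.2:ℝ))/k) - g (x,y)
      = ∑ p ∈ triSet k, W p * (g (((p.1:ℝ))/k, ((p.2:ℝ))/k) - g (x,y)) := by
    simp only [mul_sub]
    rw [Finset.sum_sub_distrib, ← Finset.sum_mul, hmass, one_mul]
  rw [hsplit]
  have hsnn : 0 ≤ ∑ p ∈ triSet k, W p * t p :=
    Finset.sum_nonneg (fun p hp => mul_nonneg (hW0 p hp) (ht0 p))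
  calc |∑ p ∈ triSet k, W p * (g (((p.1:ℝ))/k, ((p.2:ℝ))/k) - g (x,y))|
      ≤ ∑ p ∈ triSet k, |W p * (g (((p.1:ℝ))/k, ((p.2:ℝ))/k) - g (x,y))| :=
        Finset.abs_sum_le_sum_abs _ _
    _ ≤ ∑ p ∈ triSet k, W p * (L * t p ^ (α/2)) := by
        apply Finset.sum_le_sum
        intro p hp
        rw [abs_mul, abs_of_nonneg (hW0 p hp)]
        apply mul_le_mul_of_nonneg_left _ (hW0 p hp)
        have hh := hHolder _ (hmem p hp) (x,y) (by rw [hS]; exact ⟨hx0,hx1,hy0,hy1,hxy1⟩)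
        simpa [hd p] using hh
    _ = L * ∑ p ∈ triSet k, W p * t p ^ (α/2) := by
        rw [Finset.mul_sum]; exact Finset.sum_congr rfl (fun p _ => by ring)
    _ ≤ L * (∑ p ∈ triSet k, W p * t p) ^ (α/2) := mul_le_mul_of_nonneg_left hj hL
    _ ≤ L * (1/(2*(k:ℝ))) ^ (α/2) :=
        mul_le_mul_of_nonneg_left (Real.rpow_le_rpow hsnn hvle (by positivity)) hL
    _ = (2:ℝ) ^ (-(α/2)) * L * (k:ℝ) ^ (-(α/2)) := by
        rw [one_div, Real.inv_rpow (by positivity), Real.mul_rpow (by norm_num) (le_of_lt hk0),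
          mul_inv, Real.rpow_neg (by norm_num : (0:ℝ) ≤ 2), Real.rpow_neg (le_of_lt hk0)]
        ring
end

section
/- Let $M \in \mathbb{N}$ and let $\mu$ be a probability mass function on $[M]$. Let $g : \mathcal{S} \to [0,1]$ where $\mathcal{S} = \{(x,y)\in[0,1]^2 : x+y\le 1\}$. For $n \in \mathbb{N}$ and integers $r_1, r_2 \ge 0$ with $r_1 + r_2 \le n$, define $F_n(r_1/n, r_2/n) = \sum_{k=1}^{M} \mu(k) \sum_{i=0}^{k} \sum_{j=0}^{k-i} g(i/k, j/k) \binom{r_1}{i}\binom{r_2}{j}\binom{n-r_1-r_2}{k-i-j}\binom{n}{k}^{-1}$ and $H_0(r_1/n, r_2/n) = \sum_{k=1}^{M} \mu(k) \sum_{i=0}^{k}\sum_{j=0}^{k-i} g(i/k,j/k) \binom{k}{i}\binom{k-i}{j}(r_1/n)^i (r_2/n)^j (1 - r_1/n - r_2/n)^{k-i-j}$. Then there is a constant $C$ (depending only on $M$) such that $|F_n(r_1/n, r_2/n) - H_0(r_1/n, r_2/n)| \le C/n$ for all $n \ge M$ and all admissible $(r_1, r_2)$. -/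
open Finset

/-- Telescoping bound: products of [0,1]-valued functions. -/
lemma FnH0.abs_prod_sub_prod_le (s : Finset ℕ) (f g : ℕ → ℝ)
    (hf : ∀ m ∈ s, f m ∈ Set.Icc (0:ℝ) 1) (hg : ∀ m ∈ s, g m ∈ Set.Icc (0:ℝ) 1) :
    |(∏ m ∈ s, f m) - ∏ m ∈ s, g m| ≤ ∑ m ∈ s, |f m - g m| := by
  classical
  induction s using Finset.induction_on with
  | empty => simp
  | insert _ _ hx ih =>
    rename_i a s
    rw [Finset.prod_insert hx, Finset.prod_insert hx, Finset.sum_insert hx]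
    have hfa := hf a (Finset.mem_insert_self a s)
    have hga := hg a (Finset.mem_insert_self a s)
    have hf' : ∀ m ∈ s, f m ∈ Set.Icc (0:ℝ) 1 := fun m hm => hf m (Finset.mem_insert_of_mem hm)
    have hg' : ∀ m ∈ s, g m ∈ Set.Icc (0:ℝ) 1 := fun m hm => hg m (Finset.mem_insert_of_mem hm)
    have hP0 : 0 ≤ ∏ m ∈ s, f m := Finset.prod_nonneg fun m hm => (hf' m hm).1
    have hP1 : ∏ m ∈ s, f m ≤ 1 :=
      Finset.prod_le_one (fun m hm => (hf' m hm).1) (fun m hm => (hf' m hm).2)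
    have e : f a * ∏ m ∈ s, f m - g a * ∏ m ∈ s, g m
        = (f a - g a) * ∏ m ∈ s, f m + g a * ((∏ m ∈ s, f m) - ∏ m ∈ s, g m) := by ring
    rw [e]
    refine (abs_add_le _ _).trans ?_
    rw [abs_mul, abs_mul]
    have h1 : |f a - g a| * |∏ m ∈ s, f m| ≤ |f a - g a| := by
      apply mul_le_of_le_one_right (abs_nonneg _)
      rw [abs_of_nonneg hP0]; exact hP1
    have h2 : |g a| * |(∏ m ∈ s, f m) - ∏ m ∈ s, g m| ≤ ∑ m ∈ s, |f m - g m| := by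
      calc |g a| * |(∏ m ∈ s, f m) - ∏ m ∈ s, g m|
          ≤ 1 * |(∏ m ∈ s, f m) - ∏ m ∈ s, g m| := by
            apply mul_le_mul_of_nonneg_right _ (abs_nonneg _)
            rw [abs_of_nonneg hga.1]; exact hga.2
        _ = |(∏ m ∈ s, f m) - ∏ m ∈ s, g m| := one_mul _
        _ ≤ _ := ih hf' hg'
    linarith

/-- Single factor bound. -/
lemma FnH0.frac_bound (M n r t m : ℕ) (hM : 1 ≤ M) (hMn : M ≤ n) (hm : m < M)
    (ht : t ≤ m) (hrn : r ≤ n) (htr : t ≤ r) :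
    |((r - t : ℕ):ℝ)/((n - m : ℕ):ℝ) - (r:ℝ)/(n:ℝ)| ≤ 2*(M:ℝ)^2/(n:ℝ) := by
  have hmn : m < n := lt_of_lt_of_le hm hMn
  have hn0 : (0:ℝ) < n := by exact_mod_cast Nat.pos_of_ne_zero (by omega)
  have hmR : (m:ℝ) < (M:ℝ) := by exact_mod_cast hm
  have hMnR : (M:ℝ) ≤ (n:ℝ) := by exact_mod_cast hMn
  have hMR : (1:ℝ) ≤ (M:ℝ) := by exact_mod_cast hM
  have htR : (t:ℝ) ≤ (m:ℝ) := by exact_mod_cast ht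
  have hrR : (r:ℝ) ≤ (n:ℝ) := by exact_mod_cast hrn
  have hr0 : (0:ℝ) ≤ r := by positivity
  have ht0 : (0:ℝ) ≤ t := by positivity
  have hm0 : (0:ℝ) ≤ m := by positivity
  rw [Nat.cast_sub htr, Nat.cast_sub hmn.le]
  have hnm : (0:ℝ) < (n:ℝ) - m := by
    have : (m:ℝ) < (n:ℝ) := by exact_mod_cast hmn
    linarith
  have heq : ((r:ℝ)-t)/((n:ℝ)-m) - (r:ℝ)/n = ((r:ℝ)*m - t*n)/(((n:ℝ)-m)*n) := by
    field_simp; ring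
  rw [heq, abs_div, abs_of_pos (mul_pos hnm hn0), div_le_div_iff₀ (mul_pos hnm hn0) hn0]
  have h1 : |(r:ℝ)*m - t*n| ≤ 2*(M:ℝ)*n := by
    rw [abs_le]
    constructor
    · nlinarith
    · nlinarith
  have hm1R : (m:ℝ)+1 ≤ (M:ℝ) := by exact_mod_cast hm
  have key : (n:ℝ) ≤ (M:ℝ)*((n:ℝ)-m) := by
    nlinarith [mul_nonneg (show (0:ℝ) ≤ (M:ℝ)-1 by linarith) (show (0:ℝ) ≤ (n:ℝ)-M by linarith),
      mul_le_mul_of_nonneg_left (show (m:ℝ) ≤ (M:ℝ)-1 by linarith)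
        (show (0:ℝ) ≤ (M:ℝ) by linarith)]
  nlinarith [abs_nonneg ((r:ℝ)*m - t*n)]

lemma FnH0.prod3_le (a b c : ℝ) (ha : 0 ≤ a) (hb0 : 0 ≤ b) (hb1 : b ≤ 1)
    (hc0 : 0 ≤ c) (hc1 : c ≤ 1) : a * b * c ≤ a :=
  le_trans (mul_le_of_le_one_right (mul_nonneg ha hb0) hc1) (mul_le_of_le_one_right ha hb1)

lemma FnH0.term_bound (M n r₁ r₂ k i j : ℕ) (hM : 1 ≤ M) (hk1 : 1 ≤ k) (hkM : k ≤ M)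
    (hMn : M ≤ n) (hik : i ≤ k) (hjk : j ≤ k - i) (hr : r₁ + r₂ ≤ n) :
    |((r₁.choose i * r₂.choose j * ((n - r₁ - r₂).choose (k - i - j)) : ℕ) : ℝ) / (n.choose k)
      - (k.choose i : ℝ) * ((k-i).choose j) * ((r₁:ℝ)/n) ^ i * ((r₂:ℝ)/n) ^ j
          * (1 - (r₁:ℝ)/n - (r₂:ℝ)/n) ^ (k - i - j)|
    ≤ (k.choose i : ℝ) * ((k-i).choose j) * (2*(M:ℝ)^3) / n := by
  have hkn : k ≤ n := hkM.trans hMn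
  have hn0 : (0:ℝ) < n := by exact_mod_cast Nat.pos_of_ne_zero (by omega)
  set r₃ := n - r₁ - r₂ with hr₃
  set l := k - i - j with hl
  have hr1n : r₁ ≤ n := by omega
  have hr2n : r₂ ≤ n := by omega
  have hr3n : r₃ ≤ n := by omega
  have h3cast : ((r₃ : ℕ):ℝ) = (n:ℝ) - r₁ - r₂ := by
    rw [hr₃, show n - r₁ - r₂ = n - (r₁ + r₂) from by omega, Nat.cast_sub hr]
    push_cast; ring
  have h3 : 1 - (r₁:ℝ)/n - (r₂:ℝ)/n = (r₃:ℝ)/n := by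
    rw [h3cast]; field_simp
  have hp1 : (0:ℝ) ≤ (r₁:ℝ)/n ∧ (r₁:ℝ)/n ≤ 1 :=
    ⟨by positivity, by rw [div_le_one hn0]; exact_mod_cast hr1n⟩
  have hp2 : (0:ℝ) ≤ (r₂:ℝ)/n ∧ (r₂:ℝ)/n ≤ 1 :=
    ⟨by positivity, by rw [div_le_one hn0]; exact_mod_cast hr2n⟩
  have hp3 : (0:ℝ) ≤ (r₃:ℝ)/n ∧ (r₃:ℝ)/n ≤ 1 :=
    ⟨by positivity, by rw [div_le_one hn0]; exact_mod_cast hr3n⟩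
  have hc0 : (0:ℝ) ≤ (k.choose i : ℝ) * ((k-i).choose j) := by positivity
  rw [h3]
  by_cases hd : i ≤ r₁ ∧ j ≤ r₂ ∧ l ≤ r₃
  · -- main case
    obtain ⟨hi', hj', hl'⟩ := hd
    have hk' : k = i + (j + l) := by omega
    have hnum : (∏ m ∈ range k,
        (if m < i then r₁ - m else if m < i + j then r₂ - (m - i) else r₃ - (m - (i+j))))
        = r₁.descFactorial i * (r₂.descFactorial j * r₃.descFactorial l) := by
      rw [hk', Finset.prod_range_add, Finset.prod_range_add]
      congr 1
      · rw [Nat.descFactorial_eq_prod_range]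
        exact Finset.prod_congr rfl fun m hm => by
          have := Finset.mem_range.mp hm; rw [if_pos (by omega)]
      congr 1
      · rw [Nat.descFactorial_eq_prod_range]
        exact Finset.prod_congr rfl fun m hm => by
          have := Finset.mem_range.mp hm
          rw [if_neg (by omega), if_pos (by omega)]
          congr 1; omega
      · rw [Nat.descFactorial_eq_prod_range]
        exact Finset.prod_congr rfl fun m hm => by
          have := Finset.mem_range.mp hm
          rw [if_neg (by omega), if_neg (by omega)]
          congr 1; omega
    have hden : (∏ m ∈ range k, (n - m)) = n.descFactorial k :=
      (Nat.descFactorial_eq_prod_range n k).symm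
    have h1 : k.choose i * i.factorial * (k - i).factorial = k.factorial :=
      Nat.choose_mul_factorial_mul_factorial hik
    have h2 : (k-i).choose j * j.factorial * (k - i - j).factorial = (k-i).factorial :=
      Nat.choose_mul_factorial_mul_factorial hjk
    have keyNat : r₁.choose i * r₂.choose j * r₃.choose l * n.descFactorial k
        = k.choose i * (k-i).choose j *
          (r₁.descFactorial i * (r₂.descFactorial j * r₃.descFactorial l)) * n.choose k := by
      rw [Nat.descFactorial_eq_factorial_mul_choose, Nat.descFactorial_eq_factorial_mul_choose,
        Nat.descFactorial_eq_factorial_mul_choose, Nat.descFactorial_eq_factorial_mul_choose,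
        ← h1, ← h2, hl]
      ring
    have hCpos : (0:ℝ) < (n.choose k : ℝ) := by exact_mod_cast Nat.choose_pos hkn
    have hDpos : (0:ℝ) < (n.descFactorial k : ℝ) := by
      have h : 0 < n.descFactorial k := by
        rw [Nat.descFactorial_eq_factorial_mul_choose]
        exact Nat.mul_pos k.factorial_pos (Nat.choose_pos hkn)
      exact_mod_cast h
    have hFprod : (∏ m ∈ range k,
        (((if m < i then r₁ - m else if m < i + j then r₂ - (m - i) else r₃ - (m - (i+j))) : ℕ) : ℝ)
          / ((n - m : ℕ) : ℝ))
        = ((r₁.descFactorial i * (r₂.descFactorial j * r₃.descFactorial l) : ℕ):ℝ)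
          / ((n.descFactorial k : ℕ):ℝ) := by
      rw [Finset.prod_div_distrib, ← Nat.cast_prod, ← Nat.cast_prod, hnum, hden]
    have hratio : ((r₁.choose i * r₂.choose j * r₃.choose l : ℕ) : ℝ) / (n.choose k : ℝ)
        = (k.choose i : ℝ) * ((k-i).choose j) * ∏ m ∈ range k,
          (((if m < i then r₁ - m else if m < i + j then r₂ - (m - i) else r₃ - (m - (i+j))) : ℕ) : ℝ)
            / ((n - m : ℕ) : ℝ) := by
      rw [hFprod]
      have kc := congrArg (fun x : ℕ => (x:ℝ)) keyNat
      push_cast at kc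
      field_simp
      push_cast
      linear_combination kc
    have hGprod : (∏ m ∈ range k,
        (if m < i then (r₁:ℝ)/n else if m < i + j then (r₂:ℝ)/n else (r₃:ℝ)/n))
        = ((r₁:ℝ)/n)^i * (((r₂:ℝ)/n)^j * ((r₃:ℝ)/n)^l) := by
      rw [hk', Finset.prod_range_add, Finset.prod_range_add]
      congr 1
      · rw [Finset.prod_congr rfl (fun m hm => if_pos (Finset.mem_range.mp hm)),
          Finset.prod_const, Finset.card_range]
      congr 1
      · rw [Finset.prod_congr rfl (fun m hm => ?_), Finset.prod_const, Finset.card_range]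
        have := Finset.mem_range.mp hm
        rw [if_neg (by omega), if_pos (by omega)]
      · rw [Finset.prod_congr rfl (fun m hm => ?_), Finset.prod_const, Finset.card_range]
        have := Finset.mem_range.mp hm
        rw [if_neg (by omega), if_neg (by omega)]
    have hHside : (k.choose i : ℝ) * ((k-i).choose j) * ((r₁:ℝ)/n) ^ i * ((r₂:ℝ)/n) ^ j
          * ((r₃:ℝ)/n) ^ l
        = (k.choose i : ℝ) * ((k-i).choose j) * ∏ m ∈ range k,
          (if m < i then (r₁:ℝ)/n else if m < i + j then (r₂:ℝ)/n else (r₃:ℝ)/n) := by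
      rw [hGprod]; ring
    rw [hratio, hHside, ← mul_sub, abs_mul, abs_of_nonneg hc0]
    have hFmem : ∀ m ∈ range k,
        (((if m < i then r₁ - m else if m < i + j then r₂ - (m - i) else r₃ - (m - (i+j))) : ℕ) : ℝ)
          / ((n - m : ℕ) : ℝ) ∈ Set.Icc (0:ℝ) 1 := by
      intro m hm
      have hmk := Finset.mem_range.mp hm
      have hdp : (0:ℝ) < ((n - m : ℕ):ℝ) := by exact_mod_cast (by omega : 0 < n - m)
      constructor
      · positivity
      · rw [div_le_one hdp]
        have hle : (if m < i then r₁ - m else if m < i + j then r₂ - (m - i)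
            else r₃ - (m - (i+j))) ≤ n - m := by
          split_ifs <;> omega
        exact_mod_cast hle
    have hGmem : ∀ m ∈ range k,
        (if m < i then (r₁:ℝ)/n else if m < i + j then (r₂:ℝ)/n else (r₃:ℝ)/n)
          ∈ Set.Icc (0:ℝ) 1 := by
      intro m _
      split_ifs
      · exact ⟨hp1.1, hp1.2⟩
      · exact ⟨hp2.1, hp2.2⟩
      · exact ⟨hp3.1, hp3.2⟩
    have htel := FnH0.abs_prod_sub_prod_le (range k) _ _ hFmem hGmem
    have hdiff : ∀ m ∈ range k,
        |(((if m < i then r₁ - m else if m < i + j then r₂ - (m - i) else r₃ - (m - (i+j))) : ℕ) : ℝ)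
          / ((n - m : ℕ) : ℝ)
         - (if m < i then (r₁:ℝ)/n else if m < i + j then (r₂:ℝ)/n else (r₃:ℝ)/n)|
        ≤ 2*(M:ℝ)^2/(n:ℝ) := by
      intro m hm
      have hmk := Finset.mem_range.mp hm
      have hmM : m < M := lt_of_lt_of_le hmk hkM
      split_ifs with h h'
      · exact FnH0.frac_bound M n r₁ m m hM hMn hmM le_rfl hr1n (by omega)
      · exact FnH0.frac_bound M n r₂ (m - i) m hM hMn hmM (by omega) hr2n (by omega)
      · exact FnH0.frac_bound M n r₃ (m - (i+j)) m hM hMn hmM (by omega) hr3n (by omega)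
    have hsum : (∑ m ∈ range k,
        |(((if m < i then r₁ - m else if m < i + j then r₂ - (m - i) else r₃ - (m - (i+j))) : ℕ) : ℝ)
          / ((n - m : ℕ) : ℝ)
         - (if m < i then (r₁:ℝ)/n else if m < i + j then (r₂:ℝ)/n else (r₃:ℝ)/n)|)
        ≤ (k:ℝ) * (2*(M:ℝ)^2/(n:ℝ)) := by
      calc _ ≤ (range k).card • (2*(M:ℝ)^2/(n:ℝ)) := Finset.sum_le_card_nsmul _ _ _ hdiff
        _ = (k:ℝ) * (2*(M:ℝ)^2/(n:ℝ)) := by rw [Finset.card_range, nsmul_eq_mul]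
    have hkMR : (k:ℝ) ≤ (M:ℝ) := by exact_mod_cast hkM
    calc (k.choose i : ℝ) * ((k-i).choose j) * |_ - _|
        ≤ (k.choose i : ℝ) * ((k-i).choose j) * ((k:ℝ) * (2*(M:ℝ)^2/(n:ℝ))) :=
          mul_le_mul_of_nonneg_left (htel.trans hsum) hc0
      _ ≤ (k.choose i : ℝ) * ((k-i).choose j) * ((M:ℝ) * (2*(M:ℝ)^2/(n:ℝ))) := by
          exact mul_le_mul_of_nonneg_left
            (mul_le_mul_of_nonneg_right hkMR (by positivity)) hc0
      _ = (k.choose i : ℝ) * ((k-i).choose j) * (2*(M:ℝ)^3) / n := by ring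
  · -- degenerate case
    have hz : r₁.choose i * r₂.choose j * r₃.choose l = 0 := by
      rcases Nat.lt_or_ge r₁ i with h | h
      · simp [Nat.choose_eq_zero_of_lt h]
      rcases Nat.lt_or_ge r₂ j with h2 | h2
      · simp [Nat.choose_eq_zero_of_lt h2]
      have h3' : r₃ < l := by
        rcases Nat.lt_or_ge r₃ l with h3 | h3
        · exact h3
        · exact absurd ⟨h, h2, h3⟩ hd
      simp [Nat.choose_eq_zero_of_lt h3']
    rw [hz]
    simp only [Nat.cast_zero, zero_div, zero_sub, abs_neg]
    have hMfrac : ∀ p : ℕ, p ≤ M → (p:ℝ)/n ≤ (M:ℝ)/n := by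
      intro p hp
      have hp' : (p:ℝ) ≤ (M:ℝ) := by exact_mod_cast hp
      gcongr
    have hX : ((r₁:ℝ)/n) ^ i * ((r₂:ℝ)/n) ^ j * ((r₃:ℝ)/n) ^ l ≤ (M:ℝ)/n := by
      rcases Nat.lt_or_ge r₁ i with h | h
      · have hi1 : 1 ≤ i := by omega
        have hb : ((r₁:ℝ)/n) ^ i * ((r₂:ℝ)/n) ^ j * ((r₃:ℝ)/n) ^ l ≤ ((r₁:ℝ)/n) ^ i :=
          FnH0.prod3_le _ _ _ (pow_nonneg hp1.1 _) (pow_nonneg hp2.1 _)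
            (pow_le_one₀ hp2.1 hp2.2) (pow_nonneg hp3.1 _) (pow_le_one₀ hp3.1 hp3.2)
        refine hb.trans ?_
        calc ((r₁:ℝ)/n) ^ i ≤ ((r₁:ℝ)/n) ^ 1 := pow_le_pow_of_le_one hp1.1 hp1.2 hi1
          _ = (r₁:ℝ)/n := pow_one _
          _ ≤ (M:ℝ)/n := hMfrac r₁ (by omega)
      · rcases Nat.lt_or_ge r₂ j with h2 | h2
        · have hj1 : 1 ≤ j := by omega
          have he : ((r₁:ℝ)/n) ^ i * ((r₂:ℝ)/n) ^ j * ((r₃:ℝ)/n) ^ l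
              = ((r₂:ℝ)/n) ^ j * ((r₁:ℝ)/n) ^ i * ((r₃:ℝ)/n) ^ l := by ring
          rw [he]
          have hb : ((r₂:ℝ)/n) ^ j * ((r₁:ℝ)/n) ^ i * ((r₃:ℝ)/n) ^ l ≤ ((r₂:ℝ)/n) ^ j :=
            FnH0.prod3_le _ _ _ (pow_nonneg hp2.1 _) (pow_nonneg hp1.1 _)
              (pow_le_one₀ hp1.1 hp1.2) (pow_nonneg hp3.1 _) (pow_le_one₀ hp3.1 hp3.2)
          refine hb.trans ?_
          calc ((r₂:ℝ)/n) ^ j ≤ ((r₂:ℝ)/n) ^ 1 := pow_le_pow_of_le_one hp2.1 hp2.2 hj1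
            _ = (r₂:ℝ)/n := pow_one _
            _ ≤ (M:ℝ)/n := hMfrac r₂ (by omega)
        · have h3' : r₃ < l := by
            rcases Nat.lt_or_ge r₃ l with h3 | h3
            · exact h3
            · exact absurd ⟨h, h2, h3⟩ hd
          have hl1 : 1 ≤ l := by omega
          have he : ((r₁:ℝ)/n) ^ i * ((r₂:ℝ)/n) ^ j * ((r₃:ℝ)/n) ^ l
              = ((r₃:ℝ)/n) ^ l * ((r₁:ℝ)/n) ^ i * ((r₂:ℝ)/n) ^ j := by ring
          rw [he]
          have hb : ((r₃:ℝ)/n) ^ l * ((r₁:ℝ)/n) ^ i * ((r₂:ℝ)/n) ^ j ≤ ((r₃:ℝ)/n) ^ l :=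
            FnH0.prod3_le _ _ _ (pow_nonneg hp3.1 _) (pow_nonneg hp1.1 _)
              (pow_le_one₀ hp1.1 hp1.2) (pow_nonneg hp2.1 _) (pow_le_one₀ hp2.1 hp2.2)
          refine hb.trans ?_
          calc ((r₃:ℝ)/n) ^ l ≤ ((r₃:ℝ)/n) ^ 1 := pow_le_pow_of_le_one hp3.1 hp3.2 hl1
            _ = (r₃:ℝ)/n := pow_one _
            _ ≤ (M:ℝ)/n := hMfrac r₃ (by omega)
    have hMR : (1:ℝ) ≤ (M:ℝ) := by exact_mod_cast hM
    have habs : |(k.choose i : ℝ) * ((k-i).choose j) * ((r₁:ℝ)/n) ^ i * ((r₂:ℝ)/n) ^ j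
        * ((r₃:ℝ)/n) ^ l|
        = (k.choose i : ℝ) * ((k-i).choose j)
          * (((r₁:ℝ)/n) ^ i * ((r₂:ℝ)/n) ^ j * ((r₃:ℝ)/n) ^ l) := by
      rw [abs_of_nonneg (by positivity)]; ring
    rw [habs]
    have hM2 : (M:ℝ)/n ≤ 2*(M:ℝ)^3/n := by
      gcongr ?_ / n
      nlinarith [mul_le_mul_of_nonneg_left hMR (show (0:ℝ) ≤ (M:ℝ) by linarith),
        mul_le_mul_of_nonneg_left hMR (show (0:ℝ) ≤ (M:ℝ)*(M:ℝ) by nlinarith)]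
    calc (k.choose i : ℝ) * ((k-i).choose j)
          * (((r₁:ℝ)/n) ^ i * ((r₂:ℝ)/n) ^ j * ((r₃:ℝ)/n) ^ l)
        ≤ (k.choose i : ℝ) * ((k-i).choose j) * ((M:ℝ)/n) := mul_le_mul_of_nonneg_left hX hc0
      _ ≤ (k.choose i : ℝ) * ((k-i).choose j) * (2*(M:ℝ)^3/n) :=
          mul_le_mul_of_nonneg_left hM2 hc0
      _ = (k.choose i : ℝ) * ((k-i).choose j) * (2*(M:ℝ)^3) / n := by ring

lemma FnH0.inner_bound (M : ℕ) (hM : 1 ≤ M)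
    (S : Set (ℝ × ℝ)) (hS : S = {p : ℝ × ℝ | 0 ≤ p.1 ∧ p.1 ≤ 1 ∧ 0 ≤ p.2 ∧ p.2 ≤ 1 ∧ p.1 + p.2 ≤ 1})
    (g : ℝ × ℝ → ℝ) (hgrange : ∀ p ∈ S, g p ∈ Set.Icc (0:ℝ) 1)
    (n : ℕ) (hMn : M ≤ n) (r₁ r₂ : ℕ) (hr : r₁ + r₂ ≤ n)
    (k : ℕ) (hk1 : 1 ≤ k) (hkM : k ≤ M) :
    |(∑ i ∈ range (k+1), ∑ j ∈ range (k+1-i),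
        g ((i : ℝ)/k, (j : ℝ)/k) *
          ((r₁.choose i * (r₂.choose j) * ((n - r₁ - r₂).choose (k - i - j)) : ℕ) : ℝ) /
          (n.choose k)) -
      (∑ i ∈ range (k+1), ∑ j ∈ range (k+1-i),
        g ((i : ℝ)/k, (j : ℝ)/k) * (k.choose i) * ((k-i).choose j) *
          ((r₁ : ℝ)/n) ^ i * ((r₂ : ℝ)/n) ^ j * (1 - (r₁ : ℝ)/n - (r₂ : ℝ)/n) ^ (k - i - j))|
    ≤ ((M:ℝ)+1)^2 * (((M:ℝ)^M * (M:ℝ)^M * (2*(M:ℝ)^3)) / n) := by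
  have hn0 : (0:ℝ) < n := by
    exact_mod_cast Nat.pos_of_ne_zero (by omega)
  set c1 : ℝ := (M:ℝ)^M * (M:ℝ)^M * (2*(M:ℝ)^3) with hc1def
  have hc1nn : 0 ≤ c1 / n := by positivity
  -- per-term bound
  have hterm : ∀ i ∈ range (k+1), ∀ j ∈ range (k+1-i),
      |g ((i : ℝ)/k, (j : ℝ)/k) *
          ((r₁.choose i * (r₂.choose j) * ((n - r₁ - r₂).choose (k - i - j)) : ℕ) : ℝ) /
          (n.choose k)
        - g ((i : ℝ)/k, (j : ℝ)/k) * (k.choose i) * ((k-i).choose j) *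
          ((r₁ : ℝ)/n) ^ i * ((r₂ : ℝ)/n) ^ j * (1 - (r₁ : ℝ)/n - (r₂ : ℝ)/n) ^ (k - i - j)|
      ≤ c1 / n := by
    intro i hi j hj
    have hik : i ≤ k := by have := Finset.mem_range.mp hi; omega
    have hjk : j ≤ k - i := by have := Finset.mem_range.mp hj; omega
    have hk0R : (0:ℝ) < k := by exact_mod_cast hk1
    have hmemS : ((i : ℝ)/k, (j : ℝ)/k) ∈ S := by
      rw [hS]
      have hikR : (i:ℝ) ≤ k := by exact_mod_cast hik
      have hijkR : (i:ℝ) + j ≤ k := by exact_mod_cast (by omega : i + j ≤ k)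
      have hjkR : (j:ℝ) ≤ k := by exact_mod_cast (by omega : j ≤ k)
      refine ⟨by positivity, by rw [div_le_one hk0R]; exact hikR,
        by positivity, by rw [div_le_one hk0R]; exact hjkR, ?_⟩
      rw [← add_div, div_le_one hk0R]
      exact hijkR
    have hgmem := hgrange _ hmemS
    have hgabs : |g ((i : ℝ)/k, (j : ℝ)/k)| ≤ 1 := abs_le.mpr ⟨by linarith [hgmem.1], hgmem.2⟩
    have heq : g ((i : ℝ)/k, (j : ℝ)/k) *
          ((r₁.choose i * (r₂.choose j) * ((n - r₁ - r₂).choose (k - i - j)) : ℕ) : ℝ) /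
          (n.choose k)
        - g ((i : ℝ)/k, (j : ℝ)/k) * (k.choose i) * ((k-i).choose j) *
          ((r₁ : ℝ)/n) ^ i * ((r₂ : ℝ)/n) ^ j * (1 - (r₁ : ℝ)/n - (r₂ : ℝ)/n) ^ (k - i - j)
        = g ((i : ℝ)/k, (j : ℝ)/k) *
          (((r₁.choose i * (r₂.choose j) * ((n - r₁ - r₂).choose (k - i - j)) : ℕ) : ℝ) /
            (n.choose k)
          - (k.choose i : ℝ) * ((k-i).choose j) *
            ((r₁ : ℝ)/n) ^ i * ((r₂ : ℝ)/n) ^ j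
            * (1 - (r₁ : ℝ)/n - (r₂ : ℝ)/n) ^ (k - i - j)) := by
      ring
    rw [heq, abs_mul]
    have hbd := FnH0.term_bound M n r₁ r₂ k i j hM hk1 hkM hMn hik hjk hr
    have hchoosebd : (k.choose i : ℝ) * ((k-i).choose j) * (2*(M:ℝ)^3) / n ≤ c1 / n := by
      rw [hc1def]
      have hcb1 : k.choose i ≤ M ^ M :=
        le_trans (Nat.choose_le_pow k i) (le_trans (Nat.pow_le_pow_left hkM i)
          (Nat.pow_le_pow_right hM (hik.trans hkM)))
      have hcb2 : (k-i).choose j ≤ M ^ M :=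
        le_trans (Nat.choose_le_pow (k-i) j) (le_trans
          (Nat.pow_le_pow_left (le_trans (Nat.sub_le k i) hkM) j)
          (Nat.pow_le_pow_right hM (le_trans hjk (le_trans (Nat.sub_le k i) hkM))))
      gcongr
      · exact_mod_cast hcb1
      · exact_mod_cast hcb2
    calc |g ((i : ℝ)/k, (j : ℝ)/k)| * |_| ≤ 1 * ((k.choose i : ℝ) * ((k-i).choose j) * (2*(M:ℝ)^3) / n) := by
          exact mul_le_mul hgabs hbd (abs_nonneg _) zero_le_one
      _ = (k.choose i : ℝ) * ((k-i).choose j) * (2*(M:ℝ)^3) / n := one_mul _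
      _ ≤ c1 / n := hchoosebd
  rw [← Finset.sum_sub_distrib]
  refine le_trans (Finset.abs_sum_le_sum_abs _ _) ?_
  have hrow : ∀ i ∈ range (k+1),
      |(∑ j ∈ range (k+1-i),
          g ((i : ℝ)/k, (j : ℝ)/k) *
            ((r₁.choose i * (r₂.choose j) * ((n - r₁ - r₂).choose (k - i - j)) : ℕ) : ℝ) /
            (n.choose k)) -
        ∑ j ∈ range (k+1-i),
          g ((i : ℝ)/k, (j : ℝ)/k) * (k.choose i) * ((k-i).choose j) *
            ((r₁ : ℝ)/n) ^ i * ((r₂ : ℝ)/n) ^ j * (1 - (r₁ : ℝ)/n - (r₂ : ℝ)/n) ^ (k - i - j)|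
      ≤ ((M:ℝ)+1) * (c1 / n) := by
    intro i hi
    rw [← Finset.sum_sub_distrib]
    refine le_trans (Finset.abs_sum_le_sum_abs _ _) ?_
    calc (∑ j ∈ range (k+1-i), |_|) ≤ (range (k+1-i)).card • (c1 / n) :=
          Finset.sum_le_card_nsmul _ _ _ (fun j hj => hterm i hi j hj)
      _ = ((k+1-i : ℕ):ℝ) * (c1/n) := by rw [Finset.card_range, nsmul_eq_mul]
      _ ≤ ((M:ℝ)+1) * (c1/n) := by
          apply mul_le_mul_of_nonneg_right _ hc1nn
          exact_mod_cast (by omega : k + 1 - i ≤ M + 1)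
  calc (∑ i ∈ range (k+1), |_|) ≤ (range (k+1)).card • (((M:ℝ)+1) * (c1 / n)) :=
        Finset.sum_le_card_nsmul _ _ _ hrow
    _ = ((k+1 : ℕ):ℝ) * (((M:ℝ)+1) * (c1/n)) := by rw [Finset.card_range, nsmul_eq_mul]
    _ ≤ ((M:ℝ)+1) * (((M:ℝ)+1) * (c1/n)) := by
        apply mul_le_mul_of_nonneg_right _ (by positivity)
        exact_mod_cast (by omega : k + 1 ≤ M + 1)
    _ = ((M:ℝ)+1)^2 * (c1 / n) := by ring

open Finset in
theorem Fn_H0_approx (M : ℕ) (hM : 1 ≤ M) (μ : ℕ → ℝ)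
    (hμ0 : ∀ k, 0 ≤ μ k) (hμ1 : ∑ k ∈ Icc 1 M, μ k = 1)
    (S : Set (ℝ × ℝ)) (hS : S = {p : ℝ × ℝ | 0 ≤ p.1 ∧ p.1 ≤ 1 ∧ 0 ≤ p.2 ∧ p.2 ≤ 1 ∧ p.1 + p.2 ≤ 1})
    (g : ℝ × ℝ → ℝ) (hgrange : ∀ p ∈ S, g p ∈ Set.Icc (0:ℝ) 1) :
    ∃ C : ℝ, ∀ n : ℕ, M ≤ n → ∀ r₁ r₂ : ℕ, r₁ + r₂ ≤ n →
      |(∑ k ∈ Icc 1 M, μ k * ∑ i ∈ range (k+1), ∑ j ∈ range (k+1-i),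
          g ((i : ℝ)/k, (j : ℝ)/k) *
            ((r₁.choose i * (r₂.choose j) * ((n - r₁ - r₂).choose (k - i - j)) : ℕ) : ℝ) /
            (n.choose k)) -
        (∑ k ∈ Icc 1 M, μ k * ∑ i ∈ range (k+1), ∑ j ∈ range (k+1-i),
          g ((i : ℝ)/k, (j : ℝ)/k) * (k.choose i) * ((k-i).choose j) *
            ((r₁ : ℝ)/n) ^ i * ((r₂ : ℝ)/n) ^ j * (1 - (r₁ : ℝ)/n - (r₂ : ℝ)/n) ^ (k - i - j))|
        ≤ C / n := by
  refine ⟨((M:ℝ)+1)^2 * ((M:ℝ)^M * (M:ℝ)^M * (2*(M:ℝ)^3)), ?_⟩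
  intro n hMn r₁ r₂ hr
  rw [← Finset.sum_sub_distrib]
  calc |∑ k ∈ Icc 1 M, (μ k * (∑ i ∈ range (k+1), ∑ j ∈ range (k+1-i),
          g ((i : ℝ)/k, (j : ℝ)/k) *
            ((r₁.choose i * (r₂.choose j) * ((n - r₁ - r₂).choose (k - i - j)) : ℕ) : ℝ) /
            (n.choose k))
        - μ k * ∑ i ∈ range (k+1), ∑ j ∈ range (k+1-i),
          g ((i : ℝ)/k, (j : ℝ)/k) * (k.choose i) * ((k-i).choose j) *
            ((r₁ : ℝ)/n) ^ i * ((r₂ : ℝ)/n) ^ j * (1 - (r₁ : ℝ)/n - (r₂ : ℝ)/n) ^ (k - i - j))|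
      ≤ ∑ k ∈ Icc 1 M, |μ k * (∑ i ∈ range (k+1), ∑ j ∈ range (k+1-i),
          g ((i : ℝ)/k, (j : ℝ)/k) *
            ((r₁.choose i * (r₂.choose j) * ((n - r₁ - r₂).choose (k - i - j)) : ℕ) : ℝ) /
            (n.choose k))
        - μ k * ∑ i ∈ range (k+1), ∑ j ∈ range (k+1-i),
          g ((i : ℝ)/k, (j : ℝ)/k) * (k.choose i) * ((k-i).choose j) *
            ((r₁ : ℝ)/n) ^ i * ((r₂ : ℝ)/n) ^ j * (1 - (r₁ : ℝ)/n - (r₂ : ℝ)/n) ^ (k - i - j)| :=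
        Finset.abs_sum_le_sum_abs _ _
    _ ≤ ∑ k ∈ Icc 1 M, μ k * (((M:ℝ)+1)^2 * (((M:ℝ)^M * (M:ℝ)^M * (2*(M:ℝ)^3)) / n)) := by
        refine Finset.sum_le_sum fun k hk => ?_
        have hk' := Finset.mem_Icc.mp hk
        rw [← mul_sub, abs_mul, abs_of_nonneg (hμ0 k)]
        exact mul_le_mul_of_nonneg_left
          (FnH0.inner_bound M hM S hS g hgrange n hMn r₁ r₂ hr k hk'.1 hk'.2) (hμ0 k)
    _ = ((M:ℝ)+1)^2 * ((M:ℝ)^M * (M:ℝ)^M * (2*(M:ℝ)^3)) / n := by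
        rw [← Finset.sum_mul, hμ1, one_mul]; ring
end

section
/- For $n \in \mathbb{N}$ and integers $i, j, k, r_1, r_2$ with $0 \le i + j \le k \le M \le n$, $r_1, r_2 \ge 0$, $r_1 + r_2 \le n$: $\left| \binom{r_1}{i}\binom{r_2}{j}\binom{n-r_1-r_2}{k-i-j}\binom{n}{k}^{-1} - \binom{k}{i}\binom{k-i}{j}\left(\frac{r_1}{n}\right)^i \left(\frac{r_2}{n}\right)^j \left(1 - \frac{r_1}{n} - \frac{r_2}{n}\right)^{k-i-j} \right| \le c_M \binom{k}{i}\binom{k-i}{j} \frac{k^2}{n}$, where $c_M = \frac{7}{2} \prod_{w=0}^{M-1}\left(1 - \frac{w}{n}\right)^{-1}$. -/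
open Finset

private lemma tele_aux (a b : ℕ → ℝ) (ha0 : ∀ w, 0 ≤ a w) (ha1 : ∀ w, a w ≤ 1)
    (hb0 : ∀ w, 0 ≤ b w) (hb1 : ∀ w, b w ≤ 1) (k : ℕ) :
    |(∏ w ∈ range k, a w) - ∏ w ∈ range k, b w| ≤ ∑ w ∈ range k, |a w - b w| := by
  induction k with
  | zero => simp
  | succ k ih =>
    rw [prod_range_succ, prod_range_succ, sum_range_succ]
    have hpb0 : 0 ≤ ∏ w ∈ range k, b w := prod_nonneg fun w _ => hb0 w
    have hpb1 : ∏ w ∈ range k, b w ≤ 1 := prod_le_one (fun w _ => hb0 w) fun w _ => hb1 w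
    have key : (∏ w ∈ range k, a w) * a k - (∏ w ∈ range k, b w) * b k
        = ((∏ w ∈ range k, a w) - ∏ w ∈ range k, b w) * a k
          + (∏ w ∈ range k, b w) * (a k - b k) := by ring
    rw [key]
    refine (abs_add_le _ _).trans ?_
    rw [abs_mul, abs_mul]
    have h1 : |(∏ w ∈ range k, a w) - ∏ w ∈ range k, b w| * |a k|
        ≤ ∑ w ∈ range k, |a w - b w| :=
      (mul_le_of_le_one_right (abs_nonneg _)
        (by rw [abs_of_nonneg (ha0 k)]; exact ha1 k)).trans ih
    have h2 : |∏ w ∈ range k, b w| * |a k - b k| ≤ |a k - b k| := by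
      rw [abs_of_nonneg hpb0]
      exact mul_le_of_le_one_left (abs_nonneg _) hpb1
    linarith

private lemma factor_close (n r w w' : ℕ) (hr : r ≤ n) (hw' : w' ≤ w) (hw : w < n) :
    |((r - w' : ℕ) : ℝ) / ((n - w : ℕ) : ℝ) - (r : ℝ) / n| ≤ (w : ℝ) / ((n - w : ℕ) : ℝ) := by
  have hn : (0:ℝ) < n := by
    have : 0 < n := by omega
    exact_mod_cast this
  have hd : (0:ℝ) < ((n - w : ℕ) : ℝ) := by exact_mod_cast Nat.sub_pos_of_lt hw
  have hcast : ((n - w : ℕ) : ℝ) = (n : ℝ) - w := by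
    rw [Nat.cast_sub hw.le]
  have hrn : (r:ℝ) ≤ n := by exact_mod_cast hr
  have hww : (w':ℝ) ≤ w := by exact_mod_cast hw'
  have hw0 : (0:ℝ) ≤ w := by positivity
  have hw'0 : (0:ℝ) ≤ w' := by positivity
  have hr0 : (0:ℝ) ≤ r := by positivity
  have hnum : |((r - w' : ℕ) : ℝ) * n - r * ((n - w : ℕ) : ℝ)| ≤ w * n := by
    rw [hcast, abs_le]
    rcases le_or_gt w' r with h | h
    · have hc : ((r - w' : ℕ) : ℝ) = (r : ℝ) - w' := by rw [Nat.cast_sub h]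
      rw [hc]
      constructor <;> nlinarith
    · have hc : ((r - w' : ℕ) : ℝ) = 0 := by
        have : r - w' = 0 := by omega
        rw [this, Nat.cast_zero]
      have hrw : (r:ℝ) ≤ w := by exact_mod_cast (by omega : r ≤ w)
      rw [hc]
      constructor <;> nlinarith
  have heq : ((r - w' : ℕ) : ℝ) / ((n - w : ℕ) : ℝ) - (r : ℝ) / n
      = (((r - w' : ℕ) : ℝ) * n - r * ((n - w : ℕ) : ℝ)) / (((n - w : ℕ) : ℝ) * n) := by
    field_simp
  have heq2 : (w : ℝ) / ((n - w : ℕ) : ℝ) = (w * n) / (((n - w : ℕ) : ℝ) * n) := by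
    rw [mul_comm ((n - w : ℕ) : ℝ) ((n:ℝ))]
    rw [← div_div, mul_div_assoc, div_self hn.ne', mul_one]
  rw [heq, heq2, abs_div, abs_of_pos (mul_pos hd hn)]
  gcongr

private lemma frac_bound (n M k w : ℕ) (hw : w < k) (hk : k ≤ M) (hM : M ≤ n) :
    (w : ℝ) / ((n - w : ℕ) : ℝ) ≤ (∏ w' ∈ range M, (1 - (w' : ℝ)/n)⁻¹) * k / n := by
  have hn : (0:ℝ) < n := by
    have : 0 < n := by omega
    exact_mod_cast this
  have hwn : w < n := by omega
  have hpos : ∀ w' ∈ range M, (0:ℝ) < 1 - (w' : ℝ)/n := by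
    intro w' hw'
    have hw'M : w' < M := mem_range.mp hw'
    have h1 : (w' : ℝ) < n := by exact_mod_cast (by omega : w' < n)
    have h2 : (w':ℝ)/n < 1 := (div_lt_one hn).mpr h1
    linarith
  have hone : ∀ w' ∈ range M, (1:ℝ) ≤ (1 - (w' : ℝ)/n)⁻¹ := by
    intro w' hw'
    rw [le_inv_comm₀ one_pos (hpos w' hw')]
    have : (0:ℝ) ≤ (w':ℝ)/n := by positivity
    linarith
  have hwM : w ∈ range M := mem_range.mpr (by omega)
  have hCw : (1 - (w : ℝ)/n)⁻¹ ≤ ∏ w' ∈ range M, (1 - (w' : ℝ)/n)⁻¹ := by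
    rw [← mul_prod_erase (range M) (fun w' => (1 - (w' : ℝ)/n)⁻¹) hwM]
    have h1 : (1:ℝ) ≤ ∏ w' ∈ (range M).erase w, (1 - (w' : ℝ)/n)⁻¹ := by
      calc (1:ℝ) = ∏ w' ∈ (range M).erase w, 1 := by rw [prod_const_one]
        _ ≤ _ := prod_le_prod (fun _ _ => zero_le_one)
            (fun w' hw' => hone w' (mem_of_mem_erase hw'))
    exact le_mul_of_one_le_right (le_of_lt (inv_pos.mpr (hpos w hwM))) h1
  have hden : ((n - w : ℕ) : ℝ) = n * (1 - (w:ℝ)/n) := by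
    rw [Nat.cast_sub hwn.le]
    field_simp
  rw [hden]
  have hw1 : (0:ℝ) < 1 - (w:ℝ)/n := hpos w hwM
  rw [mul_comm ((n:ℝ)) _, ← div_div]
  gcongr
  rw [div_eq_mul_inv]
  have hk' : (w:ℝ) ≤ k := by exact_mod_cast hw.le
  have := mul_le_mul hk' hCw (by positivity) (by positivity)
  linarith [this]

private lemma nat_identity (k i j l r₁ r₂ m n : ℕ) (hik : i ≤ k) (hjk : j ≤ k - i)
    (hl : l = k - i - j) :
    r₁.choose i * r₂.choose j * m.choose l * n.descFactorial k
      = k.choose i * (k - i).choose j *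
          (r₁.descFactorial i * r₂.descFactorial j * m.descFactorial l) * n.choose k := by
  rw [Nat.descFactorial_eq_factorial_mul_choose n k,
    Nat.descFactorial_eq_factorial_mul_choose r₁ i,
    Nat.descFactorial_eq_factorial_mul_choose r₂ j,
    Nat.descFactorial_eq_factorial_mul_choose m l]
  have h1 : k.choose i * i.factorial * (k - i).factorial = k.factorial :=
    Nat.choose_mul_factorial_mul_factorial hik
  have h2 : (k - i).choose j * j.factorial * (k - i - j).factorial = (k - i).factorial :=
    Nat.choose_mul_factorial_mul_factorial hjk
  rw [hl, ← h1, ← h2]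
  ring

open Finset in
theorem hypergeometric_vs_multinomial_cell (n M k i j r₁ r₂ : ℕ)
    (hij : i + j ≤ k) (hkM : k ≤ M) (hMn : M ≤ n) (hr : r₁ + r₂ ≤ n) :
    |((r₁.choose i * r₂.choose j * ((n - r₁ - r₂).choose (k - i - j)) : ℕ) : ℝ) / (n.choose k) -
        (k.choose i : ℝ) * ((k - i).choose j) *
          ((r₁ : ℝ)/n) ^ i * ((r₂ : ℝ)/n) ^ j * (1 - (r₁ : ℝ)/n - (r₂ : ℝ)/n) ^ (k - i - j)|
      ≤ ((7:ℝ)/2 * ∏ w ∈ range M, (1 - (w : ℝ)/n)⁻¹) *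
          ((k.choose i : ℝ) * ((k - i).choose j)) * (k:ℝ)^2 / n := by
  rcases Nat.eq_zero_or_pos n with hn0 | hnpos
  · subst hn0
    have hM0 : M = 0 := by omega
    have hk0 : k = 0 := by omega
    have hi0 : i = 0 := by omega
    have hj0 : j = 0 := by omega
    have h1 : r₁ = 0 := by omega
    have h2 : r₂ = 0 := by omega
    subst hM0 hk0 hi0 hj0 h1 h2
    norm_num
  have hn : (0:ℝ) < n := by exact_mod_cast hnpos
  set l := k - i - j with hl
  set m := n - r₁ - r₂ with hm
  have hkn : k ≤ n := hkM.trans hMn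
  have hklij : k = i + (j + l) := by omega
  have hr₁n : r₁ ≤ n := by omega
  have hr₂n : r₂ ≤ n := by omega
  have hmn : m ≤ n := by omega
  set C := ∏ w ∈ range M, (1 - (w : ℝ)/n)⁻¹ with hC
  have hC1 : (1:ℝ) ≤ C := by
    rw [hC]
    calc (1:ℝ) = ∏ w ∈ range M, 1 := by rw [prod_const_one]
      _ ≤ _ := prod_le_prod (fun _ _ => zero_le_one) (fun w hw => by
          have hwM : w < M := mem_range.mp hw
          have h1 : (w : ℝ) < n := by exact_mod_cast (by omega : w < n)
          have h2 : (w:ℝ)/n < 1 := (div_lt_one hn).mpr h1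
          have h3 : (0:ℝ) < 1 - (w:ℝ)/n := by linarith
          rw [le_inv_comm₀ one_pos h3]
          have h4 : (0:ℝ) ≤ (w:ℝ)/n := by positivity
          linarith)
  have hC0 : (0:ℝ) ≤ C := by linarith
  set num : ℕ → ℕ := fun w =>
    if w < i then r₁ - w else if w < i + j then r₂ - (w - i) else m - (w - i - j) with hnum
  set f : ℕ → ℝ := fun w => ((num w : ℕ) : ℝ) / ((n - w : ℕ) : ℝ) with hf
  set g : ℕ → ℝ := fun w =>
    if w < i then (r₁:ℝ)/n else if w < i + j then (r₂:ℝ)/n else (m:ℝ)/n with hg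
  have hKij0 : (0:ℝ) ≤ (k.choose i : ℝ) * ((k - i).choose j) := by positivity
  -- product identities
  have hprodnum : ∏ w ∈ range k, num w
      = r₁.descFactorial i * (r₂.descFactorial j * m.descFactorial l) := by
    rw [hklij, prod_range_add, prod_range_add, Nat.descFactorial_eq_prod_range,
      Nat.descFactorial_eq_prod_range, Nat.descFactorial_eq_prod_range]
    congr 1
    · refine prod_congr rfl fun w hw => ?_
      have : w < i := mem_range.mp hw
      simp only [hnum]
      rw [if_pos this]
    congr 1
    · refine prod_congr rfl fun w hw => ?_
      have : w < j := mem_range.mp hw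
      simp only [hnum]
      rw [if_neg (by omega), if_pos (by omega)]
      congr 1
      omega
    · refine prod_congr rfl fun w hw => ?_
      have : w < l := mem_range.mp hw
      simp only [hnum]
      rw [if_neg (by omega), if_neg (by omega)]
      congr 1
      omega
  have hfprod : ∏ w ∈ range k, f w
      = ((r₁.descFactorial i * (r₂.descFactorial j * m.descFactorial l) : ℕ) : ℝ)
        / ((n.descFactorial k : ℕ) : ℝ) := by
    simp only [hf]
    rw [prod_div_distrib, ← Nat.cast_prod, ← Nat.cast_prod, hprodnum,
      Nat.descFactorial_eq_prod_range n k]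
  have hgprod : ∏ w ∈ range k, g w
      = ((r₁:ℝ)/n) ^ i * ((r₂:ℝ)/n) ^ j * ((m:ℝ)/n) ^ l := by
    have e1 : ∏ w ∈ range i, g w = ((r₁:ℝ)/n) ^ i := by
      rw [show ∏ w ∈ range i, g w = ∏ _w ∈ range i, ((r₁:ℝ)/n) from
        prod_congr rfl fun w hw => by
          simp only [hg]; rw [if_pos (mem_range.mp hw)], prod_const, card_range]
    have e2 : ∏ w ∈ range j, g (i + w) = ((r₂:ℝ)/n) ^ j := by
      rw [show ∏ w ∈ range j, g (i + w) = ∏ _w ∈ range j, ((r₂:ℝ)/n) from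
        prod_congr rfl fun w hw => by
          have : w < j := mem_range.mp hw
          simp only [hg]; rw [if_neg (by omega), if_pos (by omega)], prod_const, card_range]
    have e3 : ∏ w ∈ range l, g (i + (j + w)) = ((m:ℝ)/n) ^ l := by
      rw [show ∏ w ∈ range l, g (i + (j + w)) = ∏ _w ∈ range l, ((m:ℝ)/n) from
        prod_congr rfl fun w hw => by
          have : w < l := mem_range.mp hw
          simp only [hg]; rw [if_neg (by omega), if_neg (by omega)], prod_const, card_range]
    rw [hklij, prod_range_add, prod_range_add, e1, e2, e3, mul_assoc]
  have hchpos : (0:ℝ) < (n.choose k : ℝ) := by exact_mod_cast Nat.choose_pos hkn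
  have hdfpos : (0:ℝ) < ((n.descFactorial k : ℕ) : ℝ) := by
    have : 0 < n.descFactorial k :=
      Nat.pos_of_ne_zero fun h => absurd (Nat.descFactorial_eq_zero_iff_lt.mp h) (by omega)
    exact_mod_cast this
  have hhyper : ((r₁.choose i * r₂.choose j * m.choose l : ℕ) : ℝ) / (n.choose k : ℝ)
      = (k.choose i : ℝ) * ((k - i).choose j) * ∏ w ∈ range k, f w := by
    rw [hfprod, ← mul_div_assoc, div_eq_div_iff hchpos.ne' hdfpos.ne']
    push_cast
    have := nat_identity k i j l r₁ r₂ m n (by omega) (by omega) hl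
    have h := congrArg (fun x : ℕ => (x : ℝ)) this
    push_cast at h
    linear_combination h
  have hs : 1 - (r₁:ℝ)/n - (r₂:ℝ)/n = (m:ℝ)/n := by
    have hmcast : (m:ℝ) = (n:ℝ) - r₁ - r₂ := by
      rw [hm, Nat.cast_sub (by omega), Nat.cast_sub (by omega)]
    rw [hmcast]
    field_simp
  rw [hhyper, hs]
  have hg0 : ∀ w, 0 ≤ g w := by
    intro w
    simp only [hg]
    split_ifs <;> positivity
  have hg1 : ∀ w, g w ≤ 1 := by
    intro w
    simp only [hg]
    split_ifs
    · rw [div_le_one hn]; exact_mod_cast hr₁n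
    · rw [div_le_one hn]; exact_mod_cast hr₂n
    · rw [div_le_one hn]; exact_mod_cast hmn
  have hf0 : ∀ w, 0 ≤ f w := by
    intro w
    simp only [hf]
    positivity
  rw [show (k.choose i : ℝ) * ((k - i).choose j) * (∏ w ∈ range k, f w) -
      (k.choose i : ℝ) * ((k - i).choose j) * ((r₁ : ℝ)/n) ^ i * ((r₂ : ℝ)/n) ^ j *
        ((m:ℝ)/n) ^ l
      = (k.choose i : ℝ) * ((k - i).choose j) *
          ((∏ w ∈ range k, f w) - ∏ w ∈ range k, g w) from by rw [hgprod]; ring,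
    abs_mul, abs_of_nonneg hKij0]
  by_cases hdeg : i ≤ r₁ ∧ j ≤ r₂ ∧ l ≤ m
  · -- main case
    have hf1 : ∀ w, f w ≤ 1 := by
      intro w
      rcases lt_or_ge w n with h | h
      · have hd : (0:ℝ) < ((n - w:ℕ):ℝ) := by exact_mod_cast Nat.sub_pos_of_lt h
        simp only [hf]
        rw [div_le_one hd]
        have hnw : num w ≤ n - w := by
          simp only [hnum]
          split_ifs <;> omega
        exact_mod_cast hnw
      · have hz : n - w = 0 := by omega
        simp only [hf, hz, Nat.cast_zero, div_zero]
        exact zero_le_one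
    have perterm : ∀ w ∈ range k, |f w - g w| ≤ C * k / n := by
      intro w hw
      have hwk : w < k := mem_range.mp hw
      have hfb := frac_bound n M k w hwk hkM hMn
      rw [← hC] at hfb
      refine le_trans ?_ hfb
      rcases lt_or_ge w i with h1 | h1
      · have hfc := factor_close n r₁ w w hr₁n le_rfl (by omega)
        simp only [hf, hg, hnum, if_pos h1]
        exact hfc
      rcases lt_or_ge w (i + j) with h2 | h2
      · have hfc := factor_close n r₂ w (w - i) hr₂n (by omega) (by omega)
        simp only [hf, hg, hnum, if_neg (show ¬ w < i by omega), if_pos h2]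
        exact hfc
      · have hfc := factor_close n m w (w - i - j) hmn (by omega) (by omega)
        simp only [hf, hg, hnum, if_neg (show ¬ w < i by omega),
          if_neg (show ¬ w < i + j by omega)]
        exact hfc
    calc (k.choose i : ℝ) * ((k - i).choose j) *
          |(∏ w ∈ range k, f w) - ∏ w ∈ range k, g w|
        ≤ (k.choose i : ℝ) * ((k - i).choose j) * ∑ w ∈ range k, |f w - g w| :=
          mul_le_mul_of_nonneg_left (tele_aux f g hf0 hf1 hg0 hg1 k) hKij0
      _ ≤ (k.choose i : ℝ) * ((k - i).choose j) * ∑ w ∈ range k, (C * k / n) :=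
          mul_le_mul_of_nonneg_left (sum_le_sum perterm) hKij0
      _ = C * ((k.choose i : ℝ) * ((k - i).choose j) * (k:ℝ)^2) / n := by
          rw [sum_const, card_range, nsmul_eq_mul]
          ring
      _ ≤ (7:ℝ)/2 * (C * ((k.choose i : ℝ) * ((k - i).choose j) * (k:ℝ)^2) / n) := by
          have hx : (0:ℝ) ≤ C * ((k.choose i : ℝ) * ((k - i).choose j) * (k:ℝ)^2) / n :=
            div_nonneg (mul_nonneg hC0 (by positivity)) hn.le
          linarith [hx]
      _ = ((7:ℝ)/2 * C) * ((k.choose i : ℝ) * ((k - i).choose j)) * (k:ℝ)^2 / n := by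
          ring
  · -- degenerate case
    have hcase : r₁ < i ∨ r₂ < j ∨ m < l := by omega
    have hk1 : 1 ≤ k := by omega
    obtain ⟨w₀, hw0k, hnum0, hgw0⟩ : ∃ w₀, w₀ < k ∧ num w₀ = 0 ∧ g w₀ ≤ (k:ℝ)/n := by
      rcases hcase with h | h | h
      · refine ⟨r₁, by omega, ?_, ?_⟩
        · simp only [hnum]; rw [if_pos (show r₁ < i by omega)]; omega
        · simp only [hg]; rw [if_pos (show r₁ < i by omega)]
          gcongr
          exact_mod_cast (show r₁ ≤ k by omega)
      · refine ⟨i + r₂, by omega, ?_, ?_⟩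
        · simp only [hnum]; rw [if_neg (by omega), if_pos (by omega)]; omega
        · simp only [hg]; rw [if_neg (by omega), if_pos (by omega)]
          gcongr
          exact_mod_cast (show r₂ ≤ k by omega)
      · refine ⟨i + j + m, by omega, ?_, ?_⟩
        · simp only [hnum]; rw [if_neg (by omega), if_neg (by omega)]; omega
        · simp only [hg]; rw [if_neg (by omega), if_neg (by omega)]
          gcongr
          exact_mod_cast (show m ≤ k by omega)
    have hprodf : ∏ w ∈ range k, f w = 0 :=
      prod_eq_zero (mem_range.mpr hw0k) (by simp [hf, hnum0])
    have hgprod0 : 0 ≤ ∏ w ∈ range k, g w := prod_nonneg fun w _ => hg0 w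
    have hprodgle : ∏ w ∈ range k, g w ≤ g w₀ := by
      rw [← mul_prod_erase (range k) g (mem_range.mpr hw0k)]
      exact mul_le_of_le_one_right (hg0 w₀)
        (prod_le_one (fun w _ => hg0 w) fun w _ => hg1 w)
    have hksq : (k:ℝ) ≤ (k:ℝ)^2 := by
      have h1k : (1:ℝ) ≤ (k:ℝ) := by exact_mod_cast hk1
      nlinarith
    calc (k.choose i : ℝ) * ((k - i).choose j) *
          |(∏ w ∈ range k, f w) - ∏ w ∈ range k, g w|
        = (k.choose i : ℝ) * ((k - i).choose j) * ∏ w ∈ range k, g w := by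
          rw [hprodf, zero_sub, abs_neg, abs_of_nonneg hgprod0]
      _ ≤ (k.choose i : ℝ) * ((k - i).choose j) * ((k:ℝ)/n) :=
          mul_le_mul_of_nonneg_left (hprodgle.trans hgw0) hKij0
      _ ≤ (k.choose i : ℝ) * ((k - i).choose j) * ((k:ℝ)^2/n) := by
          gcongr
      _ = 1 * ((k.choose i : ℝ) * ((k - i).choose j) * (k:ℝ)^2/n) := by ring
      _ ≤ ((7:ℝ)/2 * C) * ((k.choose i : ℝ) * ((k - i).choose j) * (k:ℝ)^2/n) := by
          have h72 : (1:ℝ) ≤ (7:ℝ)/2 * C := by linarith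
          exact mul_le_mul_of_nonneg_right h72 (by positivity)
      _ = ((7:ℝ)/2 * C) * ((k.choose i : ℝ) * ((k - i).choose j)) * (k:ℝ)^2/n := by ring
end

section
/- Let $a_n \ge 0$ for $n \ge N \ge 2$ and suppose $\sum_{i=N}^{n} \frac{a_i}{\sqrt{i+1}} \le C\sqrt{\log n}$ for all $n \ge N$. Then the series $\sum_{n \ge N} \frac{a_n}{n+1}$ converges. -/
open Finset

private lemma abel_id' (c w : ℕ → ℝ) (N : ℕ) (hN : 1 ≤ N) : ∀ n, N ≤ n →
    ∑ i ∈ Icc N n, c i * w i =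
      (∑ i ∈ Icc N n, c i) * w n +
        ∑ i ∈ Icc N (n - 1), (∑ j ∈ Icc N i, c j) * (w i - w (i + 1)) := by
  intro n hn
  induction n, hn using Nat.le_induction with
  | base =>
      rw [Icc_self, Finset.sum_singleton, Finset.sum_singleton,
        Finset.Icc_eq_empty (by omega), Finset.sum_empty]
      ring
  | succ n hn ih =>
      obtain ⟨m, rfl⟩ : ∃ m, n = m + 1 := ⟨n - 1, by omega⟩
      simp only [Nat.add_sub_cancel] at ih ⊢
      rw [Finset.sum_Icc_succ_top (by omega : N ≤ m + 1 + 1) (fun i => c i * w i), ih,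
        Finset.sum_Icc_succ_top (by omega : N ≤ m + 1 + 1) c,
        Finset.sum_Icc_succ_top (by omega : N ≤ m + 1)
          (fun i => (∑ j ∈ Icc N i, c j) * (w i - w (i + 1)))]
      ring

private noncomputable def hmaj : ℕ → ℝ :=
  fun i => 1 / (((i:ℝ) + 1) * Real.sqrt (Real.sqrt ((i:ℝ) + 1)))

private lemma hmaj_nonneg (i : ℕ) : 0 ≤ hmaj i := by unfold hmaj; positivity

private lemma hmaj_summable : Summable hmaj := by
  have h54 : Summable (fun n : ℕ => 1 / (n:ℝ) ^ (5/4 : ℝ)) :=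
    Real.summable_one_div_nat_rpow.mpr (by norm_num)
  have h2 : Summable (fun n : ℕ => 1 / ((n:ℝ) + 1) ^ (5/4 : ℝ)) := by
    have := (summable_nat_add_iff 1).mpr h54
    simpa [Nat.cast_add] using this
  refine h2.congr fun i => ?_
  have ht : (0:ℝ) ≤ (i:ℝ) + 1 := by positivity
  unfold hmaj
  congr 1
  rw [Real.sqrt_eq_rpow, Real.sqrt_eq_rpow, ← Real.rpow_mul ht,
    show (5/4:ℝ) = 1 + 1/2 * (1/2) by norm_num, Real.rpow_add (by positivity), Real.rpow_one]

private lemma sqrt_two_le_two' : Real.sqrt 2 ≤ 2 := by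
  nlinarith [Real.sq_sqrt (by norm_num : (0:ℝ) ≤ 2), Real.sqrt_nonneg 2]

private lemma key_ineq (i : ℕ) (hi : 2 ≤ i) :
    Real.sqrt (Real.log i) * (1 / Real.sqrt ((i:ℝ) + 1) - 1 / Real.sqrt ((i:ℝ) + 2)) ≤ hmaj i := by
  set t : ℝ := (i:ℝ) + 1 with ht_def
  have hit : (1:ℝ) ≤ (i:ℝ) := by exact_mod_cast by omega
  have ht1 : (1:ℝ) ≤ t := by simp [ht_def]
  set x := Real.sqrt t with hx_def
  set y := Real.sqrt (t + 1) with hy_def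
  have hx1 : 1 ≤ x := by rw [hx_def, show (1:ℝ) = Real.sqrt 1 by simp]; exact Real.sqrt_le_sqrt ht1
  have hx0 : 0 < x := by linarith
  have hy0 : 0 < y := Real.sqrt_pos.mpr (by linarith)
  have hxy : x ≤ y := Real.sqrt_le_sqrt (by linarith)
  have hx2 : x ^ 2 = t := Real.sq_sqrt (by linarith)
  have hy2 : y ^ 2 = t + 1 := Real.sq_sqrt (by linarith)
  have hdiff0 : 0 ≤ 1 / x - 1 / y := by
    have : 1 / y ≤ 1 / x := one_div_le_one_div_of_le hx0 hxy
    linarith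
  have hdiff : 1 / x - 1 / y ≤ 1 / (2 * x ^ 3) := by
    rw [div_sub_div _ _ hx0.ne' hy0.ne', div_le_div_iff₀ (by positivity) (by positivity)]
    nlinarith [mul_pos hx0 hy0, sq_nonneg (y - x)]
  have hlog : Real.log i ≤ 2 * x := by
    have hi0 : (0:ℝ) < (i:ℝ) := by linarith
    have h1 : Real.log (Real.sqrt i) ≤ Real.sqrt i - 1 :=
      Real.log_le_sub_one_of_pos (Real.sqrt_pos.mpr hi0)
    rw [Real.log_sqrt hi0.le] at h1
    have h2 : Real.sqrt i ≤ x := Real.sqrt_le_sqrt (by simp [ht_def])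
    linarith
  have hslog : Real.sqrt (Real.log i) ≤ Real.sqrt 2 * Real.sqrt x := by
    rw [← Real.sqrt_mul (by norm_num)]
    exact Real.sqrt_le_sqrt hlog
  have hmain : Real.sqrt (Real.log i) * (1 / x - 1 / y) ≤
      (Real.sqrt 2 * Real.sqrt x) * (1 / (2 * x ^ 3)) :=
    mul_le_mul hslog hdiff hdiff0 (by positivity)
  have hfin : (Real.sqrt 2 * Real.sqrt x) * (1 / (2 * x ^ 3)) ≤ 1 / (t * Real.sqrt x) := by
    have hs1 : 1 ≤ Real.sqrt x := by
      rw [show (1:ℝ) = Real.sqrt 1 by simp]; exact Real.sqrt_le_sqrt hx1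
    have hs2 : Real.sqrt x ^ 2 = x := Real.sq_sqrt hx0.le
    rw [← hx2, mul_one_div, div_le_div_iff₀ (by positivity) (by positivity)]
    have hxx : Real.sqrt x * Real.sqrt x = x := Real.mul_self_sqrt hx0.le
    have h1 : Real.sqrt 2 * Real.sqrt x * (x ^ 2 * Real.sqrt x) = Real.sqrt 2 * x ^ 3 := by
      rw [show Real.sqrt 2 * Real.sqrt x * (x ^ 2 * Real.sqrt x)
          = Real.sqrt 2 * (Real.sqrt x * Real.sqrt x) * x ^ 2 by ring, hxx]; ring
    have h2 : Real.sqrt 2 * x ^ 3 ≤ 2 * x ^ 3 :=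
      mul_le_mul_of_nonneg_right sqrt_two_le_two' (pow_nonneg hx0.le 3)
    linarith
  have hm : hmaj i = 1 / (t * Real.sqrt x) := by simp [hmaj, ht_def, hx_def]
  rw [hm]
  calc Real.sqrt (Real.log i) * (1 / Real.sqrt ((i:ℝ) + 1) - 1 / Real.sqrt ((i:ℝ) + 2))
      = Real.sqrt (Real.log i) * (1 / x - 1 / y) := by
        rw [hx_def, hy_def, ht_def, show (i:ℝ) + 1 + 1 = (i:ℝ) + 2 by ring]
    _ ≤ _ := le_trans hmain hfin

open Finset in
theorem abel_summation_convergence_log (N : ℕ) (hN : 2 ≤ N)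
    (a : ℕ → ℝ) (ha : ∀ n, N ≤ n → 0 ≤ a n) (C : ℝ)
    (hb : ∀ n, N ≤ n →
      ∑ i ∈ Icc N n, a i / Real.sqrt ((i : ℝ) + 1) ≤ C * Real.sqrt (Real.log n)) :
    Summable (fun n : ℕ => a (N + n) / (N + n + 1)) := by
  set c : ℕ → ℝ := fun i => a i / Real.sqrt ((i:ℝ) + 1) with hc_def
  set w : ℕ → ℝ := fun i => 1 / Real.sqrt ((i:ℝ) + 1) with hw_def
  have hcnn : ∀ i, N ≤ i → 0 ≤ c i := fun i hi => div_nonneg (ha i hi) (Real.sqrt_nonneg _)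
  have hwnn : ∀ i, 0 ≤ w i := fun i => by positivity
  -- C is nonnegative
  have hC : 0 ≤ C := by
    have hlogN : 0 < Real.sqrt (Real.log N) := by
      apply Real.sqrt_pos.mpr
      apply Real.log_pos
      exact_mod_cast by omega
    have h0 : 0 ≤ C * Real.sqrt (Real.log N) := by
      refine le_trans ?_ (hb N le_rfl)
      exact Finset.sum_nonneg fun i hi => hcnn i (Finset.mem_Icc.mp hi).1
    exact (mul_nonneg_iff_of_pos_right hlogN).mp h0
  set K : ℝ := C + C * ∑' i, hmaj i with hK_def
  have hK0 : 0 ≤ K := by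
    have : 0 ≤ ∑' i, hmaj i := tsum_nonneg hmaj_nonneg
    have : 0 ≤ C * ∑' i, hmaj i := mul_nonneg hC this
    rw [hK_def]; linarith
  -- main partial sum bound
  have hbound : ∀ n, N ≤ n → ∑ i ∈ Icc N n, a i / ((i:ℝ) + 1) ≤ K := by
    intro n hn
    have hrw : ∑ i ∈ Icc N n, a i / ((i:ℝ) + 1) = ∑ i ∈ Icc N n, c i * w i := by
      refine Finset.sum_congr rfl fun i _ => ?_
      rw [hc_def, hw_def]
      simp only
      rw [div_mul_div_comm, mul_one, Real.mul_self_sqrt (by positivity)]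
    rw [hrw, abel_id' c w N (by omega) n hn]
    have hterm1 : (∑ i ∈ Icc N n, c i) * w n ≤ C := by
      have h1 : (∑ i ∈ Icc N n, c i) * w n ≤ C * Real.sqrt (Real.log n) * w n :=
        mul_le_mul_of_nonneg_right (hb n hn) (hwnn n)
      have h2 : Real.sqrt (Real.log n) * w n ≤ 1 := by
        have hn0 : (0:ℝ) < (n:ℝ) := by exact_mod_cast by omega
        have hlogn : Real.log n ≤ (n:ℝ) + 1 := by
          have := Real.log_le_sub_one_of_pos hn0
          linarith
        have hs : Real.sqrt (Real.log n) ≤ Real.sqrt ((n:ℝ) + 1) := Real.sqrt_le_sqrt hlogn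
        rw [hw_def]
        simp only
        rw [mul_one_div, div_le_one (by positivity)]
        exact hs
      calc (∑ i ∈ Icc N n, c i) * w n ≤ C * Real.sqrt (Real.log n) * w n := h1
        _ = C * (Real.sqrt (Real.log n) * w n) := by ring
        _ ≤ C * 1 := mul_le_mul_of_nonneg_left h2 hC
        _ = C := mul_one C
    have hterm2 : ∑ i ∈ Icc N (n - 1), (∑ j ∈ Icc N i, c j) * (w i - w (i + 1)) ≤
        C * ∑' i, hmaj i := by
      have hstep : ∀ i ∈ Icc N (n - 1), (∑ j ∈ Icc N i, c j) * (w i - w (i + 1)) ≤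
          C * hmaj i := by
        intro i hi
        have hNi : N ≤ i := (Finset.mem_Icc.mp hi).1
        have hi2 : 2 ≤ i := le_trans hN hNi
        have hd0 : 0 ≤ w i - w (i + 1) := by
          rw [hw_def]
          simp only
          have h := one_div_le_one_div_of_le (Real.sqrt_pos.mpr (by positivity : (0:ℝ) < (i:ℝ)+1))
            (Real.sqrt_le_sqrt (by push_cast; linarith : ((i:ℝ)+1) ≤ ((i+1:ℕ):ℝ)+1))
          linarith
        have h1 : (∑ j ∈ Icc N i, c j) * (w i - w (i + 1)) ≤
            C * Real.sqrt (Real.log i) * (w i - w (i + 1)) :=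
          mul_le_mul_of_nonneg_right (hb i hNi) hd0
        have h2 : Real.sqrt (Real.log i) * (w i - w (i + 1)) ≤ hmaj i := by
          have hkey := key_ineq i hi2
          have hwrw : w i - w (i + 1) =
              1 / Real.sqrt ((i:ℝ) + 1) - 1 / Real.sqrt ((i:ℝ) + 2) := by
            rw [hw_def]; simp only; push_cast; ring_nf
          rw [hwrw]
          exact hkey
        calc (∑ j ∈ Icc N i, c j) * (w i - w (i + 1))
            ≤ C * Real.sqrt (Real.log i) * (w i - w (i + 1)) := h1
          _ = C * (Real.sqrt (Real.log i) * (w i - w (i + 1))) := by ring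
          _ ≤ C * hmaj i := mul_le_mul_of_nonneg_left h2 hC
      calc ∑ i ∈ Icc N (n - 1), (∑ j ∈ Icc N i, c j) * (w i - w (i + 1))
          ≤ ∑ i ∈ Icc N (n - 1), C * hmaj i := Finset.sum_le_sum hstep
        _ = C * ∑ i ∈ Icc N (n - 1), hmaj i := by rw [Finset.mul_sum]
        _ ≤ C * ∑' i, hmaj i := mul_le_mul_of_nonneg_left
            (Summable.sum_le_tsum _ (fun i _ => hmaj_nonneg i) hmaj_summable) hC
    rw [hK_def]
    linarith
  -- conclude summability
  apply summable_of_sum_range_le (c := K)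
  · intro n
    exact div_nonneg (ha _ (Nat.le_add_right N n)) (by positivity)
  · intro n
    have hrw : ∑ i ∈ range n, a (N + i) / ((N:ℝ) + (i:ℝ) + 1) =
        ∑ j ∈ Ico N (N + n), a j / ((j:ℝ) + 1) := by
      rw [Finset.sum_Ico_eq_sum_range]
      simp only [Nat.add_sub_cancel_left]
      refine Finset.sum_congr rfl fun i _ => ?_
      push_cast
      ring_nf
    rw [show (fun n : ℕ => a (N + n) / ((N:ℝ) + (n:ℝ) + 1)) = fun n : ℕ =>
      a (N + n) / ((N:ℝ) + (n:ℝ) + 1) from rfl]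
    rcases Nat.eq_zero_or_pos n with hn0 | hn0
    · subst hn0
      simpa using hK0
    · have hIco : Ico N (N + n) = Icc N (N + n - 1) := by
        rw [show N + n = N + n - 1 + 1 by omega, Finset.Ico_add_one_right_eq_Icc]
        congr 1
      calc ∑ i ∈ range n, a (N + i) / ((N:ℝ) + (i:ℝ) + 1)
          = ∑ j ∈ Ico N (N + n), a j / ((j:ℝ) + 1) := hrw
        _ = ∑ j ∈ Icc N (N + n - 1), a j / ((j:ℝ) + 1) := by rw [hIco]
        _ ≤ K := hbound _ (by omega)
end
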